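/- Let g be an orientation-preserving C² diffeomorphism of [0,1] with no fixed point in (0,1). Then g² and g have the same centralizer in the group of orientation-preserving C² diffeomorphisms of [0,1]. -/

import Mathlib

/-- A model for an orientation-preserving C² diffeomorphism of [0,1]: a permutation of ℝ
that is the identity outside [0,1], restricting to a C² monotone bijection of [0,1] with
C² inverse. -/
def IsIccDiff (g : Equiv.Perm ℝ) : Prop :=
  ContDiffOn ℝ 2 ⇑g (Set.Icc 0 1) ∧ ContDiffOn ℝ 2 ⇑g.symm (Set.Icc 0 1) ∧
  Set.BijOn ⇑g (Set.Icc 0 1) (Set.Icc 0 1) ∧ StrictMonoOn ⇑g (Set.Icc 0 1) ∧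
  ∀ x : ℝ, x ∉ Set.Icc (0:ℝ) 1 → g x = x

/-!
If `g * g` commutes with `h`, then `t = h g h⁻¹` is a second square root of `g * g`, so `t` and `g`
agree at some interior point `x` (if `t < g` on `(0, 1)`, then `t t < g t < g g`). Hence
`f = g⁻¹ t` commutes with `g * g`, fixes `x`, and `g * g` has no interior fixed point, so `f = 1`
by Kopell's lemma, i.e. `h` commutes with `g`.

Kopell's lemma: let `G` contract `(0, 1)` towards `0` and let `F` commute with `G` and fix `a`.
Since `G` is `C²`, the iterates `G ^ n` have bounded distortion on the fundamental domain
`[G a, a]`. Differentiating `F ^ m ∘ G ^ n = G ^ n ∘ F ^ m` and letting `n → ∞`, where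
`(F ^ m)'(0) = 1`, bounds `(F ^ m)'` below on `[G a, a]` uniformly in `m`. A point moved by `F`
would then have an `F`-orbit with steps bounded below inside `[0, 1]`. So `F` is the identity on
`[G a, a]`, hence on all of `(0, 1)` by commutation with `G`.
-/

open Set Filter Topology Function

local notation "I" => Icc (0:ℝ) 1

lemma IsPreconnected.forall_lt_or_forall_lt_of_forall_ne {X α : Type*} [TopologicalSpace X]
    [LinearOrder α] [TopologicalSpace α] [OrderClosedTopology α] {s : Set X}
    (hs : IsPreconnected s) {f g : X → α} (hf : ContinuousOn f s) (hg : ContinuousOn g s)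
    (hne : ∀ x ∈ s, f x ≠ g x) : (∀ x ∈ s, f x < g x) ∨ (∀ x ∈ s, g x < f x) := by
  by_contra! h
  obtain ⟨⟨a, ha, hgfa⟩, ⟨b, hb, hfgb⟩⟩ := h
  obtain ⟨x, hx, hfgx⟩ := hs.intermediate_value₂ hb ha hf hg hfgb hgfa
  exact hne x hx hfgx

lemma tendsto_iterate_of_lt_self {α : Type*} [ConditionallyCompleteLinearOrder α]
    [TopologicalSpace α] [OrderTopology α] {f : α → α} {l u : α}
    (hf : ContinuousOn f (Ioo l u)) (hmaps : MapsTo f (Ioo l u) (Ioo l u))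
    (hlt : ∀ x ∈ Ioo l u, f x < x) {x : α} (hx : x ∈ Ioo l u) :
    Tendsto (fun n => f^[n] x) atTop (𝓝 l) := by
  have hmem : ∀ n, f^[n] x ∈ Ioo l u := fun n => hmaps.iterate n hx
  have hanti : Antitone fun n => f^[n] x := antitone_nat_of_succ_le fun n => by
    rw [iterate_succ_apply']; exact (hlt _ (hmem n)).le
  have hbdd : BddBelow (range fun n => f^[n] x) := ⟨l, forall_mem_range.2 fun n => (hmem n).1.le⟩
  have hlim := tendsto_atTop_ciInf hanti hbdd
  obtain hl | hl := (le_ciInf fun n => (hmem n).1.le : l ≤ ⨅ n, f^[n] x).eq_or_lt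
  · rwa [hl]
  -- otherwise the limit is an interior fixed point
  have hc : ⨅ n, f^[n] x ∈ Ioo l u := ⟨hl, (ciInf_le hbdd 0).trans_lt (hmem 0).2⟩
  exact absurd (isFixedPt_of_tendsto_iterate hlim (hf.continuousAt (isOpen_Ioo.mem_nhds hc)))
    (hlt _ hc).ne

lemma apply_apply_lt_of_forall_lt {α : Type*} [Preorder α] {s t : α → α} {S : Set α}
    (hs : MapsTo s S S) (ht : StrictMono t) (hst : ∀ x ∈ S, s x < t x) {x : α} (hx : x ∈ S) :
    s (s x) < t (t x) :=
  (hst _ (hs hx)).trans (ht (hst x hx))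

lemma Equiv.Perm.apply_apply_eq_of_commute {α : Type*} {G F : Equiv.Perm α} (hGF : Commute G F)
    {a : α} (hFa : F a = a) : F (G a) = G a := by
  rw [← Equiv.Perm.mul_apply, ← hGF.eq, Equiv.Perm.mul_apply, hFa]

section Derivatives

variable {𝕜 : Type*} [NontriviallyNormedField 𝕜] {f f' : 𝕜 → 𝕜} {s : Set 𝕜}

lemma hasDerivWithinAt_iterate (hf : ∀ x ∈ s, HasDerivWithinAt f (f' x) s x) (hs : MapsTo f s s)
    (n : ℕ) {x : 𝕜} (hx : x ∈ s) :
    HasDerivWithinAt f^[n] (∏ k ∈ Finset.range n, f' (f^[k] x)) s x := by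
  induction n with
  | zero => simpa using hasDerivWithinAt_id x s
  | succ n ih =>
    rw [iterate_succ', Finset.prod_range_succ, mul_comm]
    exact (hf _ (hs.iterate n hx)).comp x ih (hs.iterate n)

lemma HasDerivWithinAt.eq_one_of_frequently_eq {a x : 𝕜} (hf : HasDerivWithinAt f a s x)
    (hx : f x = x) (hfix : ∃ᶠ y in 𝓝[s \ {x}] x, f y = y) : a = 1 := by
  refine tendsto_nhds_unique_of_frequently_eq (hasDerivWithinAt_iff_tendsto_slope.1 hf)
    tendsto_const_nhds ((hfix.and_eventually self_mem_nhdsWithin).mono ?_)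
  rintro y ⟨hy, -, hyx⟩
  rw [slope_def_field, hy, hx, div_self (sub_ne_zero.2 hyx)]

end Derivatives

lemma mul_sub_le_sub_of_le_derivWithin {f : ℝ → ℝ} (hf : DifferentiableOn ℝ f I) {c u v : ℝ}
    (hu : 0 ≤ u) (hv : v ≤ 1) (huv : u ≤ v) (hc : ∀ x ∈ Icc u v, c ≤ derivWithin f I x) :
    c * (v - u) ≤ f v - f u := by
  have hsub : Icc u v ⊆ I := Icc_subset_Icc hu hv
  have hnhds : ∀ x ∈ Ioo u v, I ∈ 𝓝 x := fun x hx =>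
    mem_of_superset (isOpen_Ioo.mem_nhds hx) (Ioo_subset_Icc_self.trans hsub)
  refine (convex_Icc u v).mul_sub_le_image_sub_of_le_deriv (hf.continuousOn.mono hsub)
    (fun x hx => ?_) (fun x hx => ?_) u (left_mem_Icc.2 huv) v (right_mem_Icc.2 huv) huv
  all_goals rw [interior_Icc] at hx
  · exact ((hf x (hsub (Ioo_subset_Icc_self hx))).differentiableAt
      (hnhds x hx)).differentiableWithinAt
  · rw [← derivWithin_of_mem_nhds (hnhds x hx)]
    exact hc x (Ioo_subset_Icc_self hx)

open Real in
lemma prod_le_exp_mul_prod {ι : Type*} {D : ℝ → ℝ} {s : Set ℝ} {K : NNReal}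
    (hD : ∀ u ∈ s, 0 < D u) (hK : LipschitzOnWith K (log ∘ D) s) (t : Finset ι) {x y : ι → ℝ}
    (hx : ∀ k ∈ t, x k ∈ s) (hy : ∀ k ∈ t, y k ∈ s) :
    ∏ k ∈ t, D (x k) ≤ exp (K * ∑ k ∈ t, |x k - y k|) * ∏ k ∈ t, D (y k) := by
  have hexp : ∀ z : ι → ℝ, (∀ k ∈ t, z k ∈ s) → ∏ k ∈ t, D (z k) = exp (∑ k ∈ t, log (D (z k))) :=
    fun z hz => by
      rw [exp_sum]; exact Finset.prod_congr rfl fun k hk => (exp_log (hD _ (hz k hk))).symm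
  rw [hexp x hx, hexp y hy, ← exp_add, exp_le_exp, Finset.mul_sum, ← Finset.sum_add_distrib]
  refine Finset.sum_le_sum fun k hk => ?_
  have hlip := hK.dist_le_mul (x k) (hx k hk) (y k) (hy k hk)
  simp only [Real.dist_eq, comp_apply] at hlip
  linarith [le_abs_self (log (D (x k)) - log (D (y k))), hlip]

namespace IsIccDiff

variable {g h G F : Equiv.Perm ℝ} {a : ℝ}

lemma map_zero (hg : IsIccDiff g) : g 0 = 0 := by
  obtain ⟨x, hx, hgx⟩ := hg.2.2.1.surjOn (left_mem_Icc.2 zero_le_one)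
  exact le_antisymm ((hg.2.2.2.1.monotoneOn (left_mem_Icc.2 zero_le_one) hx hx.1).trans_eq hgx)
    (hg.2.2.1.mapsTo (left_mem_Icc.2 zero_le_one)).1

lemma map_one (hg : IsIccDiff g) : g 1 = 1 := by
  obtain ⟨x, hx, hgx⟩ := hg.2.2.1.surjOn (right_mem_Icc.2 zero_le_one)
  exact le_antisymm (hg.2.2.1.mapsTo (right_mem_Icc.2 zero_le_one)).2
    (hgx.symm.trans_le (hg.2.2.2.1.monotoneOn hx (right_mem_Icc.2 zero_le_one) hx.2))

lemma apply_eq_of_notMem_Ioo (hg : IsIccDiff g) {x : ℝ} (hx : x ∉ Ioo 0 1) : g x = x := by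
  by_cases hxI : x ∈ I
  · rcases eq_endpoints_or_mem_Ioo_of_mem_Icc hxI with rfl | rfl | h
    exacts [hg.map_zero, hg.map_one, absurd h hx]
  · exact hg.2.2.2.2 x hxI

protected lemma strictMono (hg : IsIccDiff g) : StrictMono g := by
  have hlow : StrictMonoOn g (Iic 0) := strictMonoOn_id.congr fun x hx =>
    (hg.apply_eq_of_notMem_Ioo fun h => not_lt.2 hx h.1).symm
  have hhigh : StrictMonoOn g (Ici 1) := strictMonoOn_id.congr fun x hx =>
    (hg.apply_eq_of_notMem_Ioo fun h => not_lt.2 hx h.2).symm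
  refine StrictMonoOn.Iic_union_Ici (a := 1) ?_ hhigh
  rw [← Iic_union_Icc_eq_Iic zero_le_one]
  exact hlow.union hg.2.2.2.1 isGreatest_Iic (isLeast_Icc zero_le_one)

lemma mapsTo_Ioo (hg : IsIccDiff g) : MapsTo g (Ioo 0 1) (Ioo 0 1) := fun _ hx =>
  ⟨hg.map_zero ▸ hg.strictMono hx.1, hg.map_one ▸ hg.strictMono hx.2⟩

protected lemma one : IsIccDiff 1 :=
  ⟨contDiffOn_id, contDiffOn_id, bijOn_id _, strictMonoOn_id, fun _ _ => rfl⟩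

protected lemma inv (hg : IsIccDiff g) : IsIccDiff g⁻¹ :=
  ⟨hg.2.1, hg.1, hg.2.2.1.perm_inv,
    fun _ _ _ _ hxy => hg.strictMono.lt_iff_lt.1 (by simpa using hxy),
    fun x hx => Equiv.Perm.inv_eq_iff_eq.2 (hg.2.2.2.2 x hx).symm⟩

protected lemma mul (hg : IsIccDiff g) (hh : IsIccDiff h) : IsIccDiff (g * h) :=
  ⟨hg.1.comp hh.1 hh.2.2.1.mapsTo, hh.inv.1.comp hg.inv.1 hg.inv.2.2.1.mapsTo,
    hg.2.2.1.comp hh.2.2.1, hg.strictMono.comp_strictMonoOn hh.2.2.2.1,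
    fun x hx => by simp [hh.2.2.2.2 x hx, hg.2.2.2.2 x hx]⟩

protected lemma pow (hg : IsIccDiff g) (n : ℕ) : IsIccDiff (g ^ n) := by
  induction n with
  | zero => exact IsIccDiff.one
  | succ n ih => rw [pow_succ]; exact ih.mul hg

lemma hasDerivWithinAt (hg : IsIccDiff g) {x : ℝ} (hx : x ∈ I) :
    HasDerivWithinAt g (derivWithin g I x) I x :=
  (hg.1.differentiableOn two_ne_zero x hx).hasDerivWithinAt

lemma derivWithin_pos (hg : IsIccDiff g) {x : ℝ} (hx : x ∈ I) : 0 < derivWithin g I x := by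
  refine hg.2.2.2.1.monotoneOn.derivWithin_nonneg.lt_of_ne fun h0 => ?_
  have hinv := (hg.inv.hasDerivWithinAt (hg.2.2.1.mapsTo hx)).comp x (hg.hasDerivWithinAt hx)
    hg.2.2.1.mapsTo
  have hid : ⇑g⁻¹ ∘ ⇑g = id := funext g.symm_apply_apply
  rw [hid, ← h0, mul_zero] at hinv
  exact zero_ne_one ((uniqueDiffOn_Icc zero_lt_one x hx).eq_deriv _ hinv (hasDerivWithinAt_id x I))

lemma tendsto_pow_apply (hG : IsIccDiff G) (hGlt : ∀ x ∈ Ioo 0 1, G x < x) {x : ℝ}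
    (hx : x ∈ Ioo 0 1) : Tendsto (fun n : ℕ => (G ^ n) x) atTop (𝓝 0) :=
  tendsto_iterate_of_lt_self (hG.1.continuousOn.mono Ioo_subset_Icc_self) hG.mapsTo_Ioo hGlt hx

lemma exists_derivWithin_pow_le (hG : IsIccDiff G) :
    ∃ C, ∀ a ∈ I, ∀ n : ℕ, ∀ x ∈ Icc (G a) a, ∀ y ∈ Icc (G a) a,
      derivWithin ⇑(G ^ n) I x ≤ C * derivWithin ⇑(G ^ n) I y := by
  obtain ⟨K, hK⟩ : ∃ K, LipschitzOnWith K (Real.log ∘ derivWithin G I) I :=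
    ((hG.1.derivWithin (uniqueDiffOn_Icc zero_lt_one) (by norm_num)).log
      fun x hx => (hG.derivWithin_pos hx).ne').exists_lipschitzOnWith one_ne_zero
      (convex_Icc 0 1) isCompact_Icc
  refine ⟨Real.exp K, fun a ha n x hx y hy => ?_⟩
  have hJ : Icc (G a) a ⊆ I := Icc_subset_Icc (hG.2.2.1.mapsTo ha).1 ha.2
  have hprod : ∀ z ∈ I,
      derivWithin ⇑(G ^ n) I z = ∏ k ∈ Finset.range n, derivWithin G I ((G ^ k) z) :=
    fun z hz => (hasDerivWithinAt_iterate (fun w hw => hG.hasDerivWithinAt hw)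
      hG.2.2.1.mapsTo n hz).derivWithin (uniqueDiffOn_Icc zero_lt_one z hz)
  -- `G ^ k` maps `[G a, a]` into `[G ^ (k + 1) a, G ^ k a]`, and these lengths telescope
  have hlen : ∀ k, |(G ^ k) x - (G ^ k) y| ≤ (G ^ k) a - (G ^ (k + 1)) a := fun k => by
    have hmono := (hG.pow k).strictMono.monotone
    rw [pow_succ, Equiv.Perm.mul_apply]
    exact abs_sub_le_iff.2
      ⟨by linarith [hmono hx.2, hmono hy.1], by linarith [hmono hx.1, hmono hy.2]⟩
  have hsum : ∑ k ∈ Finset.range n, |(G ^ k) x - (G ^ k) y| ≤ 1 := calc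
    _ ≤ ∑ k ∈ Finset.range n, ((G ^ k) a - (G ^ (k + 1)) a) := Finset.sum_le_sum fun k _ => hlen k
    _ = a - (G ^ n) a := Finset.sum_range_sub' (fun k => (G ^ k) a) n
    _ ≤ 1 := by linarith [ha.2, ((hG.pow n).2.2.1.mapsTo ha).1]
  rw [hprod x (hJ hx), hprod y (hJ hy)]
  calc _ ≤ Real.exp (K * ∑ k ∈ Finset.range n, |(G ^ k) x - (G ^ k) y|) *
        ∏ k ∈ Finset.range n, derivWithin G I ((G ^ k) y) :=
        prod_le_exp_mul_prod (fun u hu => hG.derivWithin_pos hu) hK _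
          (fun k _ => (hG.pow k).2.2.1.mapsTo (hJ hx)) (fun k _ => (hG.pow k).2.2.1.mapsTo (hJ hy))
    _ ≤ Real.exp K * ∏ k ∈ Finset.range n, derivWithin G I ((G ^ k) y) := by
        gcongr
        · exact Finset.prod_nonneg fun k _ =>
            (hG.derivWithin_pos ((hG.pow k).2.2.1.mapsTo (hJ hy))).le
        · exact mul_le_of_le_one_right K.2 hsum

lemma mapsTo_Icc (hF : IsIccDiff F) (hGF : Commute G F) (hFa : F a = a) :
    MapsTo F (Icc (G a) a) (Icc (G a) a) := fun _ hx =>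
  ⟨(Equiv.Perm.apply_apply_eq_of_commute hGF hFa).symm.trans_le (hF.strictMono.monotone hx.1),
    hFa ▸ hF.strictMono.monotone hx.2⟩

lemma derivWithin_zero_eq_one (hG : IsIccDiff G) (hF : IsIccDiff F)
    (hGlt : ∀ x ∈ Ioo 0 1, G x < x) (hGF : Commute G F) (ha : a ∈ Ioo 0 1) (hFa : F a = a) :
    derivWithin F I 0 = 1 := by
  have hmem : ∀ n : ℕ, (G ^ n) a ∈ Ioo 0 1 := fun n => (hG.pow n).mapsTo_Ioo ha
  have horbit : Tendsto (fun n : ℕ => (G ^ n) a) atTop (𝓝[I \ {0}] 0) :=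
    tendsto_nhdsWithin_iff.2 ⟨hG.tendsto_pow_apply hGlt ha,
      Eventually.of_forall fun n => ⟨Ioo_subset_Icc_self (hmem n), (hmem n).1.ne'⟩⟩
  exact (hF.hasDerivWithinAt (left_mem_Icc.2 zero_le_one)).eq_one_of_frequently_eq hF.map_zero
    (horbit.frequently (Frequently.of_forall fun n =>
      Equiv.Perm.apply_apply_eq_of_commute (hGF.pow_left n) hFa))

lemma one_le_mul_derivWithin (hG : IsIccDiff G) (hF : IsIccDiff F)
    (hGlt : ∀ x ∈ Ioo 0 1, G x < x) (hGF : Commute G F) (ha : a ∈ Ioo 0 1) (hFa : F a = a)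
    {C : ℝ} (hC : ∀ n : ℕ, ∀ x ∈ Icc (G a) a, ∀ y ∈ Icc (G a) a,
      derivWithin ⇑(G ^ n) I x ≤ C * derivWithin ⇑(G ^ n) I y)
    {x : ℝ} (hx : x ∈ Icc (G a) a) : 1 ≤ C * derivWithin F I x := by
  have hxIoo : x ∈ Ioo 0 1 := ⟨(hG.mapsTo_Ioo ha).1.trans_le hx.1, hx.2.trans_lt ha.2⟩
  have hxI : x ∈ I := Ioo_subset_Icc_self hxIoo
  -- differentiating `F ∘ G ^ n = G ^ n ∘ F` at `x` and using the distortion bound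
  have hle : ∀ n : ℕ, derivWithin F I ((G ^ n) x) ≤ C * derivWithin F I x := fun n => by
    have hcomm : ⇑F ∘ ⇑(G ^ n) = ⇑(G ^ n) ∘ ⇑F := congrArg DFunLike.coe (hGF.pow_left n).eq.symm
    have h₁ := (hF.hasDerivWithinAt ((hG.pow n).2.2.1.mapsTo hxI)).comp x
      ((hG.pow n).hasDerivWithinAt hxI) (hG.pow n).2.2.1.mapsTo
    have h₂ := ((hG.pow n).hasDerivWithinAt (hF.2.2.1.mapsTo hxI)).comp x
      (hF.hasDerivWithinAt hxI) hF.2.2.1.mapsTo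
    rw [hcomm] at h₁
    have hchain := (uniqueDiffOn_Icc zero_lt_one x hxI).eq_deriv _ h₁ h₂
    have hdist := hC n _ (hF.mapsTo_Icc hGF hFa hx) x hx
    refine le_of_mul_le_mul_right ?_ ((hG.pow n).derivWithin_pos hxI)
    calc _ = derivWithin ⇑(G ^ n) I (F x) * derivWithin F I x := hchain
      _ ≤ C * derivWithin ⇑(G ^ n) I x * derivWithin F I x :=
          mul_le_mul_of_nonneg_right hdist (hF.derivWithin_pos hxI).le
      _ = _ := by ring
  have hlim := ((hF.1.continuousOn_derivWithin (uniqueDiffOn_Icc zero_lt_one) one_le_two) 0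
    (left_mem_Icc.2 zero_le_one)).tendsto.comp (tendsto_nhdsWithin_iff.2
      ⟨hG.tendsto_pow_apply hGlt hxIoo, Eventually.of_forall fun n => (hG.pow n).2.2.1.mapsTo hxI⟩)
  rw [derivWithin_zero_eq_one hG hF hGlt hGF ha hFa] at hlim
  exact le_of_tendsto' hlim hle

lemma apply_le_of_mem_Icc (hG : IsIccDiff G) (hF : IsIccDiff F)
    (hGlt : ∀ x ∈ Ioo 0 1, G x < x) (hGF : Commute G F) (ha : a ∈ Ioo 0 1) (hFa : F a = a)
    {x₀ : ℝ} (hx₀ : x₀ ∈ Icc (G a) a) : F x₀ ≤ x₀ := by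
  by_contra! hlt
  obtain ⟨C, hC⟩ := hG.exists_derivWithin_pow_le
  have hlow : ∀ m : ℕ, ∀ x ∈ Icc (G a) a, 1 ≤ C * derivWithin ⇑(F ^ m) I x := fun m _ hx =>
    one_le_mul_derivWithin hG (hF.pow m) hGlt (hGF.pow_right m) ha
      (Equiv.Perm.pow_apply_eq_self_of_apply_eq_self hFa m) (hC a (Ioo_subset_Icc_self ha)) hx
  have hJ : Icc (G a) a ⊆ I := Icc_subset_Icc (hG.mapsTo_Ioo ha).1.le ha.2.le
  have hFx₀ : F x₀ ∈ Icc (G a) a := hF.mapsTo_Icc hGF hFa hx₀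
  have hCpos : 0 < C := pos_of_mul_pos_left (one_pos.trans_le (hlow 0 x₀ hx₀))
    ((hF.pow 0).derivWithin_pos (hJ hx₀)).le
  set δ := C⁻¹ * (F x₀ - x₀)
  have hδpos : 0 < δ := mul_pos (inv_pos.2 hCpos) (sub_pos.2 hlt)
  -- the orbit of `x₀` under `F` moves by at least `δ` at each step, but stays in `[0, 1]`
  have hstep : ∀ m : ℕ, (F ^ m) x₀ + δ ≤ (F ^ (m + 1)) x₀ := fun m => by
    have := mul_sub_le_sub_of_le_derivWithin ((hF.pow m).1.differentiableOn two_ne_zero)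
      (hJ hx₀).1 (hJ hFx₀).2 hlt.le fun x hx => (inv_le_iff_one_le_mul₀' hCpos).2
        (hlow m x ⟨hx₀.1.trans hx.1, hx.2.trans hFx₀.2⟩)
    rw [pow_succ, Equiv.Perm.mul_apply]
    linarith
  have hspread : ∀ m : ℕ, x₀ + m * δ ≤ (F ^ m) x₀ := fun m => by
    induction m with
    | zero => simp
    | succ m ih => rw [Nat.cast_succ]; linarith [hstep m]
  obtain ⟨m, hm⟩ := exists_nat_gt δ⁻¹
  have h1 : 1 < m * δ := (inv_lt_iff_one_lt_mul₀ hδpos).1 hm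
  linarith [hspread m, ((hF.pow m).2.2.1.mapsTo (hJ hx₀)).2, (hJ hx₀).1]

lemma apply_eq_of_mem_Icc (hG : IsIccDiff G) (hF : IsIccDiff F)
    (hGlt : ∀ x ∈ Ioo 0 1, G x < x) (hGF : Commute G F) (ha : a ∈ Ioo 0 1) (hFa : F a = a)
    {x : ℝ} (hx : x ∈ Icc (G a) a) : F x = x := by
  refine (apply_le_of_mem_Icc hG hF hGlt hGF ha hFa hx).antisymm ?_
  simpa using apply_le_of_mem_Icc hG hF.inv hGlt hGF.inv_right ha
    (Equiv.Perm.inv_eq_iff_eq.2 hFa.symm) (hF.mapsTo_Icc hGF hFa hx)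

lemma apply_eq_of_mem_Icc_pow (hG : IsIccDiff G) (hF : IsIccDiff F)
    (hGlt : ∀ x ∈ Ioo 0 1, G x < x) (hGF : Commute G F) (n : ℕ) {b : ℝ} (hb : b ∈ Ioo 0 1)
    (hFb : F b = b) {x : ℝ} (hx : x ∈ Icc ((G ^ n) b) b) : F x = x := by
  induction n generalizing b with
  | zero =>
    rw [pow_zero, Equiv.Perm.one_apply] at hx
    rw [le_antisymm hx.2 hx.1, hFb]
  | succ n ih =>
    rcases le_or_gt (G b) x with hGb | hGb
    · exact apply_eq_of_mem_Icc hG hF hGlt hGF hb hFb ⟨hGb, hx.2⟩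
    · rw [pow_succ, Equiv.Perm.mul_apply] at hx
      exact ih (hG.mapsTo_Ioo hb) (Equiv.Perm.apply_apply_eq_of_commute hGF hFb) ⟨hx.1, hGb.le⟩

lemma eq_one_of_commute_of_lt_self (hG : IsIccDiff G) (hF : IsIccDiff F)
    (hGlt : ∀ x ∈ Ioo 0 1, G x < x) (hGF : Commute G F) (ha : a ∈ Ioo 0 1) (hFa : F a = a) :
    F = 1 := by
  ext x
  by_cases hx : x ∈ Ioo 0 1
  swap
  · exact hF.apply_eq_of_notMem_Ioo hx
  obtain ⟨n, hn⟩ := ((hG.tendsto_pow_apply hGlt hx).eventually_lt_const ha.1).exists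
  have hb : (G ^ n)⁻¹ a ∈ Ioo 0 1 := (hG.pow n).inv.mapsTo_Ioo ha
  obtain ⟨m, hm⟩ := ((hG.tendsto_pow_apply hGlt hb).eventually_lt_const hx.1).exists
  refine apply_eq_of_mem_Icc_pow hG hF hGlt hGF m hb
    (Equiv.Perm.apply_apply_eq_of_commute (hGF.pow_left n).inv_left hFa) ⟨hm.le, ?_⟩
  simpa using ((hG.pow n).inv.strictMono hn).le

/-- Kopell's lemma. -/
theorem eq_one_of_commute (hG : IsIccDiff G) (hF : IsIccDiff F)
    (hGfree : ∀ x ∈ Ioo 0 1, G x ≠ x) (hGF : Commute G F) (ha : a ∈ Ioo 0 1) (hFa : F a = a) :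
    F = 1 := by
  rcases isPreconnected_Ioo.forall_lt_or_forall_lt_of_forall_ne
    (hG.1.continuousOn.mono Ioo_subset_Icc_self) continuousOn_id hGfree with hlt | hgt
  · exact eq_one_of_commute_of_lt_self hG hF hlt hGF ha hFa
  · refine eq_one_of_commute_of_lt_self hG.inv hF (fun x hx => ?_) hGF.inv_left ha hFa
    simpa using hgt _ (hG.inv.mapsTo_Ioo hx)

lemma exists_apply_eq_of_mul_self_eq {s t : Equiv.Perm ℝ} (hs : IsIccDiff s)
    (ht : IsIccDiff t) (hst : s * s = t * t) : ∃ x ∈ Ioo 0 1, s x = t x := by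
  by_contra! hne
  have hx : (2⁻¹ : ℝ) ∈ Ioo 0 1 := by norm_num
  have hsq := DFunLike.congr_fun hst 2⁻¹
  simp only [Equiv.Perm.mul_apply] at hsq
  rcases isPreconnected_Ioo.forall_lt_or_forall_lt_of_forall_ne
    (hs.1.continuousOn.mono Ioo_subset_Icc_self) (ht.1.continuousOn.mono Ioo_subset_Icc_self)
    hne with hlt | hgt
  · exact (apply_apply_lt_of_forall_lt hs.mapsTo_Ioo ht.strictMono hlt hx).ne hsq
  · exact (apply_apply_lt_of_forall_lt ht.mapsTo_Ioo hs.strictMono hgt hx).ne' hsq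

end IsIccDiff

/-- Corollary 5.1: if g is an orientation-preserving C² diffeomorphism of [0,1] with no
fixed point in (0,1), then g and g² have the same centralizer in Diff₊²([0,1]). -/
theorem centralizer_sq_eq_centralizer_Icc (g : Equiv.Perm ℝ) (hg : IsIccDiff g)
    (hfree : ∀ x ∈ Set.Ioo (0:ℝ) 1, g x ≠ x) :
    ∀ h : Equiv.Perm ℝ, IsIccDiff h → (Commute g h ↔ Commute (g * g) h) := by
  intro h hh
  refine ⟨fun hc => hc.mul_left hc, fun hc => ?_⟩
  set t := h * g * h⁻¹
  have ht : IsIccDiff t := (hh.mul hg).mul hh.inv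
  have htt : t * t = g * g := by
    rw [show t * t = h * (g * g) * h⁻¹ by simp only [t]; group, ← hc.eq, mul_inv_cancel_right]
  obtain ⟨x, hx, hgx⟩ := hg.exists_apply_eq_of_mul_self_eq ht htt.symm
  have hsq_free : ∀ y ∈ Ioo 0 1, (g * g) y ≠ y := fun y hy hgy =>
    hfree y hy ((Function.Commute.id_right.iterate_pos_eq_iff_map_eq hg.strictMono.monotone
      strictMono_id two_pos).1 hgy)
  have hcomm : Commute (g * g) (g⁻¹ * t) :=
    ((Commute.refl g).mul_left (Commute.refl g)).inv_right.mul_right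
      (htt ▸ (Commute.refl t).mul_left (Commute.refl t))
  have hgt : g⁻¹ * t = 1 :=
    (hg.mul hg).eq_one_of_commute (hg.inv.mul ht) hsq_free hcomm hx (by simp [← hgx])
  exact eq_mul_inv_iff_mul_eq.1 (inv_mul_eq_one.1 hgt)
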